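/- arXiv:1510.04129 — 4 statements merged into one kernel-verified Lean document; each statement's English description precedes it below -/
import Mathlib

section
/- For all 1 ≤ k ≤ n+1 and all 1 ≤ i ≠ j ≤ n+1, the operators on R satisfy H_k∘T_{i,j} − T_{i,j}∘H_k = (δ_{k,i} − δ_{k,j})·T_{i,j}. -/
open MvPolynomial

/-- The generators `h_1, …, h_n` of `R = ℂ[h_1,…,h_n]`, together with
`h_{n+1} := -(h_1 + ⋯ + h_n)`.  Indices: `i : Fin (n+1)` with `(i : ℕ) < n`
corresponding to `h_1, …, h_n` and `i = Fin.last n` to `h_{n+1}`. -/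
noncomputable def Hp (n : ℕ) (i : Fin (n + 1)) : MvPolynomial (Fin n) ℂ :=
  if h : (i : ℕ) < n then X ⟨i, h⟩ else -∑ j : Fin n, X j

/-- The automorphism `σ_i` of `R` determined by `σ_i(h_k) = h_k - δ_{k,i}` for `1 ≤ i ≤ n`,
and `σ_{n+1} = id`. -/
noncomputable def sigma (n : ℕ) (i : Fin (n + 1)) :
    MvPolynomial (Fin n) ℂ ≃ₐ[ℂ] MvPolynomial (Fin n) ℂ :=
  if h : (i : ℕ) < n then
    AlgEquiv.ofAlgHom
      (aeval fun k => X k - if k = ⟨i, h⟩ then 1 else 0)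
      (aeval fun k => X k + if k = ⟨i, h⟩ then 1 else 0)
      (by ext k : 1; by_cases hk : k = ⟨i, h⟩ <;> simp [hk])
      (by ext k : 1; by_cases hk : k = ⟨i, h⟩ <;> simp [hk])
  else AlgEquiv.refl

/-- The operator `T_{i,j}` on `R`:
`T_{i,j}(f) = a_i a_j⁻¹ (δ_{i∈S} + δ_{i∉S}(h_i - b - 1)) (δ_{j∈S}(h_j - b) + δ_{j∉S}) σ_i(σ_j⁻¹(f))`. -/
noncomputable def T (n : ℕ) (b : ℂ) (S : Finset (Fin (n + 1))) (a : Fin (n + 1) → ℂ)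
    (i j : Fin (n + 1)) (f : MvPolynomial (Fin n) ℂ) : MvPolynomial (Fin n) ℂ :=
  (a i * (a j)⁻¹) • ((if i ∈ S then 1 else Hp n i - C b - 1)
    * (if j ∈ S then Hp n j - C b else 1) * sigma n i ((sigma n j).symm f))

/-! `σ_i ∘ σ_j⁻¹` is an algebra automorphism sending `h_k` to `h_k + δ_{k,j} - δ_{k,i}`, so
`T_{i,j}(h_k f) = (h_k + δ_{k,j} - δ_{k,i}) T_{i,j}(f)`, which is the commutation relation. -/

lemma sigma_C (n : ℕ) (i : Fin (n + 1)) (c : ℂ) : sigma n i (C c) = C c :=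
  (sigma n i).commutes c

lemma Hp_castSucc (n : ℕ) (m : Fin n) : Hp n m.castSucc = X m := by
  simp [Hp]

lemma Hp_last (n : ℕ) : Hp n (Fin.last n) = -∑ m : Fin n, X m := by
  simp [Hp]

lemma sigma_castSucc_apply (n : ℕ) (m : Fin n) (p : MvPolynomial (Fin n) ℂ) :
    sigma n m.castSucc p = aeval (fun k => X k - if k = m then 1 else 0) p := by
  simp [sigma]

lemma sigma_last (n : ℕ) : sigma n (Fin.last n) = AlgEquiv.refl := by
  simp [sigma]

-- `σ_{n+1} = id` while every other `σ_i` moves `h_{n+1}` by `+1`, hence the correction term.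
lemma sigma_Hp (n : ℕ) (i k : Fin (n + 1)) :
    sigma n i (Hp n k) = Hp n k - C (if k = i then 1 else 0)
      + C (if k = Fin.last n then 1 else 0) := by
  induction i using Fin.lastCases with
  | last => simp [sigma_last]
  | cast m =>
    rw [sigma_castSucc_apply]
    induction k using Fin.lastCases with
    | last =>
      simp only [Hp_last, map_neg, map_sum, aeval_X, Finset.sum_sub_distrib, Finset.sum_ite_eq',
        Finset.mem_univ, ↓reduceIte, (Fin.castSucc_ne_last m).symm, C_0, C_1]
      ring
    | cast l =>
      simp [Hp_castSucc, Fin.castSucc_ne_last, apply_ite C]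

lemma sigma_symm_Hp (n : ℕ) (j k : Fin (n + 1)) :
    (sigma n j).symm (Hp n k) = Hp n k + C (if k = j then 1 else 0)
      - C (if k = Fin.last n then 1 else 0) := by
  apply (sigma n j).injective
  rw [AlgEquiv.apply_symm_apply, map_sub, map_add, sigma_Hp, sigma_C, sigma_C]
  ring

lemma sigma_sigma_symm_Hp (n : ℕ) (i j k : Fin (n + 1)) :
    sigma n i ((sigma n j).symm (Hp n k))
      = Hp n k + C ((if k = j then 1 else 0) - (if k = i then 1 else 0)) := by
  rw [sigma_symm_Hp, map_sub, map_add, sigma_Hp, sigma_C, sigma_C, C_sub]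
  ring

lemma T_Hp_mul (n : ℕ) (b : ℂ) (S : Finset (Fin (n + 1))) (a : Fin (n + 1) → ℂ)
    (i j k : Fin (n + 1)) (f : MvPolynomial (Fin n) ℂ) :
    T n b S a i j (Hp n k * f)
      = (Hp n k + C ((if k = j then 1 else 0) - (if k = i then 1 else 0))) * T n b S a i j f := by
  simp only [T, map_mul, sigma_sigma_symm_Hp, smul_eq_C_mul]
  ring

theorem statement5_general (n : ℕ) (b : ℂ) (S : Finset (Fin (n + 1)))
    (a : Fin (n + 1) → ℂ)
    (k i j : Fin (n + 1)) (f : MvPolynomial (Fin n) ℂ) :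
    Hp n k * T n b S a i j f - T n b S a i j (Hp n k * f)
      = ((if k = i then (1 : ℂ) else 0) - (if k = j then (1 : ℂ) else 0))
          • T n b S a i j f := by
  rw [T_Hp_mul, smul_eq_C_mul, C_sub, C_sub]
  ring

/-- For all `1 ≤ k ≤ n+1` and `1 ≤ i ≠ j ≤ n+1`, the operators on `R` satisfy
`H_k ∘ T_{i,j} - T_{i,j} ∘ H_k = (δ_{k,i} - δ_{k,j}) T_{i,j}`, where `H_k` is
multiplication by `h_k` (stated pointwise). -/
theorem statement5 (n : ℕ) (hn : 1 ≤ n) (b : ℂ) (S : Finset (Fin (n + 1)))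
    (a : Fin (n + 1) → ℂ) (ha : ∀ j, a j ≠ 0) (halast : a (Fin.last n) = 1)
    (k i j : Fin (n + 1)) (hij : i ≠ j) (f : MvPolynomial (Fin n) ℂ) :
    Hp n k * T n b S a i j f - T n b S a i j (Hp n k * f)
      = ((if k = i then (1 : ℂ) else 0) - (if k = j then (1 : ℂ) else 0))
          • T n b S a i j f :=
  statement5_general n b S a k i j f
end

section
/- For all 1 ≤ i ≠ j ≤ n+1 and 1 ≤ k ≠ l ≤ n+1 with (k,l) ≠ (j,i), the operators on R satisfy T_{i,j}∘T_{k,l} − T_{k,l}∘T_{i,j} = δ_{j,k}·T_{i,l} − δ_{l,i}·T_{k,j}, where a term on the right-hand side is interpreted as the zero operator whenever its Kronecker delta coefficient is 0. -/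
/-!
Write `T_{i,j} f = (a_i / a_j) • (W_{i,j} · τ_{i,j} f)` with `τ_{i,j} = σ_i σ_j⁻¹` (`shift`) and
the polynomial `W_{i,j}` (`weight`). Although a single `σ_i` also moves `h_{n+1}`, the quotient
`τ_{i,j}` only moves `h_j` up and `h_i` down by one. The `τ`'s are translations, so they commute
and `τ_{i,j} τ_{j,l} = τ_{i,l}`. Hence the commutator equals
`(a_i a_k / a_j a_l) • (W_{i,j} τ_{i,j}(W_{k,l}) - W_{k,l} τ_{k,l}(W_{i,j})) · τ_{i,j} τ_{k,l} f`, and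
the claim reduces to an identity between the weights. It rests on `Q(x) P(x+1) - P(x) Q(x-1) = 1`
for the one-variable factors `(P, Q) = (1, x - b)` or `(x - b - 1, 1)` of the weights.
-/

open MvPolynomial

theorem MvPolynomial.algHom_comp_comm_of_translation {σ R : Type*} [CommSemiring R]
    {φ ψ : MvPolynomial σ R →ₐ[R] MvPolynomial σ R} {c d : σ → R}
    (hφ : ∀ m, φ (X m) = X m + C (c m)) (hψ : ∀ m, ψ (X m) = X m + C (d m)) :
    φ.comp ψ = ψ.comp φ := by
  refine algHom_ext fun m => ?_
  simp only [AlgHom.comp_apply, hφ, hψ, map_add, algHom_C, algebraMap_eq]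
  exact add_right_comm _ _ _

theorem Fin.sum_univ_castSucc_ite_eq {R : Type*} [AddCommGroup R] [One R] {n : ℕ}
    (j : Fin (n + 1)) :
    ∑ m : Fin n, (if m.castSucc = j then (1 : R) else 0) = 1 - if Fin.last n = j then 1 else 0 := by
  rw [eq_sub_iff_add_eq, ← Fin.sum_univ_castSucc (fun p => if p = j then (1 : R) else 0),
    Finset.sum_ite_eq' Finset.univ j, if_pos (Finset.mem_univ j)]

section Shift

variable (n : ℕ)

lemma sigma_X (i : Fin (n + 1)) (m : Fin n) :
    sigma n i (X m) = X m + C (-if m.castSucc = i then 1 else 0) := by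
  by_cases hi : (i : ℕ) < n
  · have hm : m = ⟨i, hi⟩ ↔ m.castSucc = i := by simp [Fin.ext_iff]
    simp only [sigma, dif_pos hi, AlgEquiv.ofAlgHom_apply, aeval_X, hm]
    split_ifs <;> simp [sub_eq_add_neg]
  · have hm : m.castSucc ≠ i := fun h => hi (h ▸ m.isLt)
    simp [sigma, hi, hm]

lemma sigma_symm_X (i : Fin (n + 1)) (m : Fin n) :
    (sigma n i).symm (X m) = X m + C (if m.castSucc = i then 1 else 0) := by
  rw [AlgEquiv.symm_apply_eq, map_add, sigma_X, ← algebraMap_eq, AlgEquiv.commutes]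
  simp

noncomputable def shift (i j : Fin (n + 1)) :
    MvPolynomial (Fin n) ℂ ≃ₐ[ℂ] MvPolynomial (Fin n) ℂ :=
  (sigma n j).symm.trans (sigma n i)

lemma shift_apply (i j : Fin (n + 1)) (f : MvPolynomial (Fin n) ℂ) :
    shift n i j f = sigma n i ((sigma n j).symm f) := rfl

lemma shift_X (i j : Fin (n + 1)) (m : Fin n) :
    shift n i j (X m)
      = X m + C ((if m.castSucc = j then 1 else 0) - if m.castSucc = i then 1 else 0) := by
  rw [shift_apply, sigma_symm_X, map_add, sigma_X, ← algebraMap_eq, AlgEquiv.commutes]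
  simp only [algebraMap_eq, map_neg, map_sub]
  ring

lemma shift_Hp (i j p : Fin (n + 1)) :
    shift n i j (Hp n p) = Hp n p + C ((if p = j then 1 else 0) - if p = i then 1 else 0) := by
  by_cases hp : (p : ℕ) < n
  · have hcast : (⟨p, hp⟩ : Fin n).castSucc = p := rfl
    simp only [Hp, dif_pos hp, shift_X, hcast]
  · obtain rfl : p = Fin.last n := Fin.ext (by simp; omega)
    rw [Hp, dif_neg hp, map_neg, map_sum]
    simp only [shift_X]
    rw [Finset.sum_add_distrib, ← map_sum, Finset.sum_sub_distrib, Fin.sum_univ_castSucc_ite_eq,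
      Fin.sum_univ_castSucc_ite_eq]
    simp only [map_sub, map_one]
    ring

lemma shift_comm (i j k l : Fin (n + 1)) (f : MvPolynomial (Fin n) ℂ) :
    shift n i j (shift n k l f) = shift n k l (shift n i j f) :=
  AlgHom.congr_fun (algHom_comp_comm_of_translation (φ := (shift n i j).toAlgHom)
    (ψ := (shift n k l).toAlgHom) (shift_X n i j) (shift_X n k l)) f

lemma shift_shift (i j l : Fin (n + 1)) (f : MvPolynomial (Fin n) ℂ) :
    shift n i j (shift n j l f) = shift n i l f := by
  simp only [shift_apply, AlgEquiv.symm_apply_apply]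

end Shift

section Weight

variable (n : ℕ) (b : ℂ) (S : Finset (Fin (n + 1)))

noncomputable def weight (i j : Fin (n + 1)) : MvPolynomial (Fin n) ℂ :=
  (if i ∈ S then 1 else Hp n i - C b - 1) * (if j ∈ S then Hp n j - C b else 1)

lemma shift_weight (i j k l : Fin (n + 1)) :
    shift n i j (weight n b S k l)
      = (if k ∈ S then 1
          else Hp n k + C ((if k = j then 1 else 0) - if k = i then 1 else 0) - C b - 1)
        * (if l ∈ S then Hp n l + C ((if l = j then 1 else 0) - if l = i then 1 else 0) - C b
          else 1) := by
  simp only [weight, map_mul, apply_ite (shift n i j), map_one, map_sub, shift_Hp,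
    ← algebraMap_eq, AlgEquiv.commutes]

/- Only `h_i, h_j, h_k, h_l` occur, each moved by at most one: once it is known which indices
coincide and which lie in `S`, what is left is a polynomial identity in these generators. -/
lemma weight_mul_shift_weight_sub {i j k l : Fin (n + 1)} (hne : (k, l) ≠ (j, i)) :
    weight n b S i j * shift n i j (weight n b S k l)
        - weight n b S k l * shift n k l (weight n b S i j)
      = (if j = k then weight n b S i l else 0) - if l = i then weight n b S k j else 0 := by
  rw [shift_weight, shift_weight]
  simp only [weight]
  grind

variable (a : Fin (n + 1) → ℂ)

lemma T_eq_smul (i j : Fin (n + 1)) (f : MvPolynomial (Fin n) ℂ) :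
    T n b S a i j f = (a i / a j) • (weight n b S i j * shift n i j f) := by
  rw [div_eq_mul_inv]
  rfl

lemma T_T (i j k l : Fin (n + 1)) (f : MvPolynomial (Fin n) ℂ) :
    T n b S a i j (T n b S a k l f) = (a i / a j * (a k / a l)) •
      (weight n b S i j * shift n i j (weight n b S k l) * shift n i j (shift n k l f)) := by
  simp only [T_eq_smul, map_smul, map_mul, mul_smul_comm, smul_smul, mul_assoc]

end Weight

theorem statement7_general (n : ℕ) (b : ℂ) (S : Finset (Fin (n + 1)))
    (a : Fin (n + 1) → ℂ) (ha : ∀ j, a j ≠ 0)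
    (i j k l : Fin (n + 1)) (hne : (k, l) ≠ (j, i))
    (f : MvPolynomial (Fin n) ℂ) :
    T n b S a i j (T n b S a k l f) - T n b S a k l (T n b S a i j f)
      = (if j = k then (1 : ℂ) else 0) • T n b S a i l f
        - (if l = i then (1 : ℂ) else 0) • T n b S a k j f := by
  rw [T_T, T_T, shift_comm n k l i j, mul_comm (a k / a l), ← smul_sub, ← sub_mul,
    weight_mul_shift_weight_sub n b S hne]
  rcases eq_or_ne j k with rfl | hjk
  · have hli : l ≠ i := fun h => hne (h ▸ rfl)
    simp [hli, shift_shift, T_eq_smul, div_mul_div_cancel₀ (ha j)]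
  rcases eq_or_ne l i with rfl | hli
  · rw [shift_comm, shift_shift]
    simp [hjk, T_eq_smul, mul_comm (a l / a j), div_mul_div_cancel₀ (ha l)]
  · simp [hjk, hli]

/-- For all `1 ≤ i ≠ j ≤ n+1` and `1 ≤ k ≠ l ≤ n+1` with `(k,l) ≠ (j,i)`:
`T_{i,j} ∘ T_{k,l} - T_{k,l} ∘ T_{i,j} = δ_{j,k} T_{i,l} - δ_{l,i} T_{k,j}` (stated pointwise;
a term with vanishing Kronecker delta coefficient is the zero operator). -/
theorem statement7 (n : ℕ) (hn : 1 ≤ n) (b : ℂ) (S : Finset (Fin (n + 1)))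
    (a : Fin (n + 1) → ℂ) (ha : ∀ j, a j ≠ 0) (halast : a (Fin.last n) = 1)
    (i j k l : Fin (n + 1)) (hij : i ≠ j) (hkl : k ≠ l) (hne : (k, l) ≠ (j, i))
    (f : MvPolynomial (Fin n) ℂ) :
    T n b S a i j (T n b S a k l f) - T n b S a k l (T n b S a i j f)
      = (if j = k then (1 : ℂ) else 0) • T n b S a i l f
        - (if l = i then (1 : ℂ) else 0) • T n b S a k j f :=
  statement7_general n b S a ha i j k l hne f
end

section
/- Suppose n+1 ∉ S. Then for every m̄ ∈ ℤ_{≥0}^{n+1}, the following identities hold in R: for every 1 ≤ j ≤ n, a_j^{−1}·(m_j+1)·σ_j^{−1}(P_{m̄+ε_j}(S,a)) = Θ_{m̄}(S,a) if j ∈ S, and a_j^{−1}·(m_j+1)·σ_j^{−1}(P_{m̄+ε_j}(S,a)) = (h_j − b)·Θ_{m̄}(S,a) if j ∉ S; moreover (m_{n+1}+1)·P_{m̄+ε_{n+1}}(S,a) = (h_{n+1} − b − 1)·Θ_{m̄}(S,a). -/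
open MvPolynomial

/-- The scalar `a^{m̄}/m̄!`. -/
noncomputable def coef (n : ℕ) (a : Fin (n + 1) → ℂ) (m : Fin (n + 1) → ℕ) : ℂ :=
  (∏ j, a j ^ m j) / ((∏ j, (m j).factorial : ℕ) : ℂ)

/-- `P_{m̄}(S,a) = (a^{m̄}/m̄!) ∏_{s ∉ S} ∏_{k=1}^{m_s} (h_s - b - k)`. -/
noncomputable def Pm (n : ℕ) (b : ℂ) (S : Finset (Fin (n + 1))) (a : Fin (n + 1) → ℂ)
    (m : Fin (n + 1) → ℕ) : MvPolynomial (Fin n) ℂ :=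
  coef n a m • ∏ s ∈ Sᶜ, ∏ k ∈ Finset.range (m s), (Hp n s - C (b + k + 1))

/-- `P'_{m̄}(S,a) = (a^{m̄}/m̄!) ∏_{s∉S, s≠n+1} ∏_{k=1}^{m_s}(h_s - b - k) ⋅ C ⋅`
`∏_{t=1}^{m_{n+1}}(h_{n+1} + nb - t + 1)`, where
`C = ∏_{r=1}^{N-m_{n+1}}(h_{n+1} - b - 1 + r)` if `n+1 ∈ S` and `C = 1` otherwise. -/
noncomputable def P' (n : ℕ) (b : ℂ) (S : Finset (Fin (n + 1))) (a : Fin (n + 1) → ℂ)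
    (N : ℕ) (m : Fin (n + 1) → ℕ) : MvPolynomial (Fin n) ℂ :=
  coef n a m •
    ((∏ s ∈ Sᶜ.erase (Fin.last n), ∏ k ∈ Finset.range (m s), (Hp n s - C (b + k + 1)))
      * (if Fin.last n ∈ S then
            ∏ r ∈ Finset.range (N - m (Fin.last n)), (Hp n (Fin.last n) - C (b - r))
          else 1)
      * ∏ t ∈ Finset.range (m (Fin.last n)), (Hp n (Fin.last n) + C ((n : ℂ) * b - t)))

/-- `Δ_{m̄}(S,a) = (a^{m̄}/m̄!) ∏_{s∉S} ∏_{k=1}^{m_s}(h_s - b - k) ⋅`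
`∏_{r=2}^{N-m_{n+1}}(h_{n+1} - b - 2 + r) ⋅ ∏_{t=1}^{m_{n+1}}(h_{n+1} + nb - t)`. -/
noncomputable def Δm (n : ℕ) (b : ℂ) (S : Finset (Fin (n + 1))) (a : Fin (n + 1) → ℂ)
    (N : ℕ) (m : Fin (n + 1) → ℕ) : MvPolynomial (Fin n) ℂ :=
  coef n a m •
    ((∏ s ∈ Sᶜ, ∏ k ∈ Finset.range (m s), (Hp n s - C (b + k + 1)))
      * (∏ r ∈ Finset.range (N - m (Fin.last n) - 1), (Hp n (Fin.last n) - C (b - r)))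
      * ∏ t ∈ Finset.range (m (Fin.last n)), (Hp n (Fin.last n) + C ((n : ℂ) * b - t - 1)))

/-- `Θ_{m̄}(S,a) = (a^{m̄}/m̄!) ∏_{s∉S, s≠n+1} ∏_{k=1}^{m_s}(h_s - b - k) ⋅`
`∏_{k=1}^{m_{n+1}}(h_{n+1} - b - k - 1)`. -/
noncomputable def Θm (n : ℕ) (b : ℂ) (S : Finset (Fin (n + 1))) (a : Fin (n + 1) → ℂ)
    (m : Fin (n + 1) → ℕ) : MvPolynomial (Fin n) ℂ :=
  coef n a m •
    ((∏ s ∈ Sᶜ.erase (Fin.last n), ∏ k ∈ Finset.range (m s), (Hp n s - C (b + k + 1)))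
      * ∏ k ∈ Finset.range (m (Fin.last n)), (Hp n (Fin.last n) - C (b + k + 2)))

/-- `Υ_{m̄}(S,a) = (a^{m̄}/m̄!) ∏_{s∉S, s≠n+1} ∏_{k=1}^{m_s}(h_s - b - k) ⋅`
`∏_{t=1}^{m_{n+1}}(h_{n+1} + nb - t)`. -/
noncomputable def Υm (n : ℕ) (b : ℂ) (S : Finset (Fin (n + 1))) (a : Fin (n + 1) → ℂ)
    (m : Fin (n + 1) → ℕ) : MvPolynomial (Fin n) ℂ :=
  coef n a m •
    ((∏ s ∈ Sᶜ.erase (Fin.last n), ∏ k ∈ Finset.range (m s), (Hp n s - C (b + k + 1)))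
      * ∏ t ∈ Finset.range (m (Fin.last n)), (Hp n (Fin.last n) + C ((n : ℂ) * b - t - 1)))

/-- `h̄_i = h_i - δ_{i,n+1}`. -/
noncomputable def Hbar (n : ℕ) (i : Fin (n + 1)) : MvPolynomial (Fin n) ℂ :=
  Hp n i - if i = Fin.last n then 1 else 0

/-- The `(n+1) × (n+1)` matrix `A(λ,b,S,N)` with entries in `R`:
`A_{ii} = h̄_i - λ - N + 2` and, for `i ≠ j`,
`A_{ij} = (δ_{i∈S} + δ_{i∉S}(h̄_i - b)) (δ_{j∈S}(h̄_j - b) + δ_{j∉S})`. -/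
noncomputable def Amat (n : ℕ) (lam b : ℂ) (S : Finset (Fin (n + 1))) (N : ℕ) :
    Matrix (Fin (n + 1)) (Fin (n + 1)) (MvPolynomial (Fin n) ℂ) :=
  fun i j =>
    if i = j then Hbar n i - C (lam + N - 2)
    else (if i ∈ S then 1 else Hbar n i - C b) * (if j ∈ S then Hbar n j - C b else 1)

/-!
`σ_j⁻¹` raises `h_j` by one, lowers `h_{n+1}` by one and fixes the other `h_s`. So it turns the
`h_{n+1}`-block `∏_{k=1}^{m_{n+1}} (h_{n+1} - b - k)` of `P_{m̄+ε_j}` into the `h_{n+1}`-block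
of `Θ_{m̄}` and, when `j ∉ S`, the `h_j`-block `∏_{k=1}^{m_j+1} (h_j - b - k)` into
`(h_j - b) ∏_{k=1}^{m_j} (h_j - b - k)`; the scalar `a^{m̄+ε_j}/(m̄+ε_j)!` is `a_j/(m_j+1)` times
`a^{m̄}/m̄!`. For `ε_{n+1}` one only splits off the first factor `h_{n+1} - b - 1`.
-/

open Finset

section ShiftedProducts

variable {σ K : Type*} [CommRing K] (x : MvPolynomial σ K) (c : K) (m : ℕ)

theorem prod_range_succ_sub_C :
    ∏ k ∈ range (m + 1), (x - C (c + k + 1))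
      = (x - C (c + 1)) * ∏ k ∈ range m, (x - C (c + k + 2)) := by
  rw [prod_range_succ', mul_comm]
  congr 1
  · simp
  · refine prod_congr rfl fun k _ => ?_
    push_cast
    ring_nf

theorem prod_range_add_one_sub_C :
    ∏ k ∈ range m, (x + 1 - C (c + k + 2)) = ∏ k ∈ range m, (x - C (c + k + 1)) := by
  refine prod_congr rfl fun k _ => ?_
  rw [show c + k + 2 = c + k + 1 + 1 by ring, map_add, map_one]
  ring

end ShiftedProducts

theorem prod_succ_at_eq_mul_prod_erase {ι M : Type*} [Fintype ι] [DecidableEq ι]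
    [CommMonoid M] (f : ι → ℕ → M) (m : ι → ℕ) (j : ι) :
    ∏ l, f l (m l + if l = j then 1 else 0) = f j (m j + 1) * ∏ l ∈ univ.erase j, f l (m l) := by
  rw [← mul_prod_erase _ _ (mem_univ j), if_pos rfl]
  congr 1
  exact prod_congr rfl fun l hl => by rw [if_neg (ne_of_mem_erase hl), add_zero]

theorem coef_succ_at (n : ℕ) (a : Fin (n + 1) → ℂ) (m : Fin (n + 1) → ℕ) (j : Fin (n + 1)) :
    coef n a (fun l => m l + if l = j then 1 else 0) = a j / (m j + 1) * coef n a m := by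
  unfold coef
  rw [prod_succ_at_eq_mul_prod_erase (fun l k => a l ^ k),
    prod_succ_at_eq_mul_prod_erase (fun _ k => k.factorial),
    ← mul_prod_erase univ (fun l => a l ^ m l) (mem_univ j),
    ← mul_prod_erase univ (fun l => (m l).factorial) (mem_univ j), Nat.factorial_succ, pow_succ]
  have : ∏ l ∈ univ.erase j, ((m l).factorial : ℂ) ≠ 0 :=
    prod_ne_zero_iff.mpr fun l _ => Nat.cast_ne_zero.mpr (Nat.factorial_ne_zero _)
  push_cast
  field_simp

section Sigma

variable {n : ℕ} {j : Fin (n + 1)} (b : ℂ)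

theorem Hp_of_ne_last {s : Fin (n + 1)} (hs : s ≠ Fin.last n) :
    Hp n s = X ⟨s, Fin.val_lt_last hs⟩ :=
  dif_pos (Fin.val_lt_last hs)

theorem sigma_symm_apply (hj : (j : ℕ) < n) (p : MvPolynomial (Fin n) ℂ) :
    (sigma n j).symm p = aeval (fun k => X k + if k = ⟨j, hj⟩ then 1 else 0) p := by
  simp only [sigma, dif_pos hj]
  rfl

theorem sigma_symm_C (c : ℂ) : (sigma n j).symm (C c) = C c :=
  (sigma n j).symm.commutes c

theorem sigma_symm_Hp_self (hj : (j : ℕ) < n) : (sigma n j).symm (Hp n j) = Hp n j + 1 := by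
  have hjl : j ≠ Fin.last n := fun h => by simp [h] at hj
  rw [sigma_symm_apply hj, Hp_of_ne_last hjl, aeval_X, if_pos rfl]

theorem sigma_symm_Hp_of_ne (hj : (j : ℕ) < n) {s : Fin (n + 1)} (hsj : s ≠ j)
    (hs : s ≠ Fin.last n) : (sigma n j).symm (Hp n s) = Hp n s := by
  simp [sigma_symm_apply hj, Hp_of_ne_last hs, Fin.ext_iff, Fin.val_ne_iff.mpr hsj]

theorem sigma_symm_Hp_last (hj : (j : ℕ) < n) :
    (sigma n j).symm (Hp n (Fin.last n)) = Hp n (Fin.last n) - 1 := by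
  simp only [Hp, Fin.val_last, lt_irrefl, dite_false, sigma_symm_apply hj, map_neg, map_sum,
    aeval_X, sum_add_distrib, sum_ite_eq', mem_univ, if_true]
  ring

theorem sigma_symm_prod_Hp_sub_C (s : Fin (n + 1)) (M : ℕ) :
    (sigma n j).symm (∏ k ∈ range M, (Hp n s - C (b + k + 1)))
      = ∏ k ∈ range M, ((sigma n j).symm (Hp n s) - C (b + k + 1)) := by
  simp only [map_prod, map_sub, sigma_symm_C]

theorem sigma_symm_factor (hj : (j : ℕ) < n) (m : Fin (n + 1) → ℕ) {s : Fin (n + 1)}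
    (hs : s ≠ Fin.last n) :
    (sigma n j).symm (∏ k ∈ range (m s + if s = j then 1 else 0), (Hp n s - C (b + k + 1)))
      = (if s = j then Hp n j - C b else 1) * ∏ k ∈ range (m s), (Hp n s - C (b + k + 1)) := by
  rw [sigma_symm_prod_Hp_sub_C]
  by_cases hsj : s = j
  · subst hsj
    rw [if_pos rfl, if_pos rfl, sigma_symm_Hp_self hj, prod_range_succ_sub_C,
      prod_range_add_one_sub_C, map_add, map_one]
    ring
  · rw [if_neg hsj, if_neg hsj, sigma_symm_Hp_of_ne hj hsj hs, add_zero, one_mul]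

theorem sigma_symm_factor_last (hj : (j : ℕ) < n) (M : ℕ) :
    (sigma n j).symm (∏ k ∈ range M, (Hp n (Fin.last n) - C (b + k + 1)))
      = ∏ k ∈ range M, (Hp n (Fin.last n) - C (b + k + 2)) := by
  rw [sigma_symm_prod_Hp_sub_C, sigma_symm_Hp_last hj, ← prod_range_add_one_sub_C, sub_add_cancel]

end Sigma

theorem Pm_eq_smul_mul_last {n : ℕ} (b : ℂ) {S : Finset (Fin (n + 1))} (a : Fin (n + 1) → ℂ)
    (m : Fin (n + 1) → ℕ) (hS : Fin.last n ∉ S) :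
    Pm n b S a m = coef n a m •
      ((∏ s ∈ Sᶜ.erase (Fin.last n), ∏ k ∈ range (m s), (Hp n s - C (b + k + 1)))
        * ∏ k ∈ range (m (Fin.last n)), (Hp n (Fin.last n) - C (b + k + 1))) := by
  rw [Pm, ← mul_prod_erase _ _ (mem_compl.mpr hS), mul_comm]

theorem statement14_general (n : ℕ) (b : ℂ) (S : Finset (Fin (n + 1)))
    (a : Fin (n + 1) → ℂ) (ha : ∀ j, a j ≠ 0) (halast : a (Fin.last n) = 1)
    (hS : Fin.last n ∉ S) (m : Fin (n + 1) → ℕ) :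
    (∀ j : Fin (n + 1), (j : ℕ) < n →
      ((a j)⁻¹ * (m j + 1 : ℂ)) •
          (sigma n j).symm (Pm n b S a (fun l => m l + if l = j then 1 else 0))
        = if j ∈ S then Θm n b S a m else (Hp n j - C b) * Θm n b S a m) ∧
    (m (Fin.last n) + 1 : ℂ) •
        Pm n b S a (fun l => m l + if l = Fin.last n then 1 else 0)
      = (Hp n (Fin.last n) - C b - 1) * Θm n b S a m := by
  refine ⟨fun j hj => ?_, ?_⟩
  · have hjl : j ≠ Fin.last n := fun h => by simp [h] at hj
    have hcoef : (a j)⁻¹ * (m j + 1) * (a j / (m j + 1)) = 1 := by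
      field_simp [ha j]
    rw [Pm_eq_smul_mul_last b a _ hS, map_smul, map_mul, map_prod, if_neg hjl.symm,
      add_zero, sigma_symm_factor_last b hj,
      prod_congr rfl fun s hs => sigma_symm_factor b hj m (ne_of_mem_erase hs),
      prod_mul_distrib, prod_ite_eq', smul_smul, coef_succ_at, ← mul_assoc, hcoef, one_mul, Θm]
    by_cases hjS : j ∈ S
    · rw [if_pos hjS, if_neg fun h => mem_compl.mp (mem_of_mem_erase h) hjS, one_mul]
    · rw [if_neg hjS, if_pos (mem_erase.mpr ⟨hjl, mem_compl.mpr hjS⟩), mul_smul_comm, mul_assoc]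
  · rw [Pm_eq_smul_mul_last b a _ hS, if_pos rfl, prod_range_succ_sub_C,
      prod_congr rfl fun s hs => by rw [if_neg (ne_of_mem_erase hs), add_zero], smul_smul,
      coef_succ_at, halast, ← mul_assoc, mul_one_div_cancel (Nat.cast_add_one_ne_zero _),
      one_mul, Θm, map_add, map_one, mul_smul_comm]
    congr 1
    ring

/-- Lemma 7(2), first family of identities (`n+1 ∉ S`): for every `m̄`, for `1 ≤ j ≤ n`,
`a_j⁻¹ (m_j+1) σ_j⁻¹(P_{m̄+ε_j}(S,a)) = Θ_{m̄}(S,a)` if `j ∈ S`,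
`= (h_j - b) Θ_{m̄}(S,a)` if `j ∉ S`; moreover
`(m_{n+1}+1) P_{m̄+ε_{n+1}}(S,a) = (h_{n+1} - b - 1) Θ_{m̄}(S,a)`. -/
theorem statement14 (n : ℕ) (hn : 1 ≤ n) (b : ℂ) (S : Finset (Fin (n + 1)))
    (a : Fin (n + 1) → ℂ) (ha : ∀ j, a j ≠ 0) (halast : a (Fin.last n) = 1)
    (hS : Fin.last n ∉ S) (m : Fin (n + 1) → ℕ) :
    (∀ j : Fin (n + 1), (j : ℕ) < n →
      ((a j)⁻¹ * (m j + 1 : ℂ)) •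
          (sigma n j).symm (Pm n b S a (fun l => m l + if l = j then 1 else 0))
        = if j ∈ S then Θm n b S a m else (Hp n j - C b) * Θm n b S a m) ∧
    (m (Fin.last n) + 1 : ℂ) •
        Pm n b S a (fun l => m l + if l = Fin.last n then 1 else 0)
      = (Hp n (Fin.last n) - C b - 1) * Θm n b S a m :=
  statement14_general n b S a ha halast hS m
end

section
/- For all λ, b ∈ ℂ, every subset S ⊆ {1,…,n+1} and every N ∈ ℤ_{≥0}, the determinant of the matrix A(λ,b,S,N) equals the constant polynomial (−nb − λ − N + 1)·(b − λ − N + 2)^n in R. -/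
open MvPolynomial

/- Writing `c = b - λ - N + 2`, the matrix is the rank-one perturbation `c I + u vᵀ` with
`u_i v_i = h̄_i - b`, so the matrix determinant lemma gives `det A = c^n (c + ∑ (h̄_i - b))`.
Since `h_1 + ⋯ + h_{n+1} = 0`, the sum is `-1 - (n+1) b`, which leaves
`c^n (-nb - λ - N + 1)`. -/

namespace Matrix

variable {ι R : Type*} [Fintype ι] [DecidableEq ι] [Nonempty ι] [CommRing R]

theorem det_scalar_add_vecMulVec (c : R) (u v : ι → R) :
    (scalar ι c + vecMulVec u v).det = c ^ (Fintype.card ι - 1) * (c + u ⬝ᵥ v) := by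
  -- the left side is the characteristic polynomial of `-u vᵀ` at `c`, so `c` need not be a unit
  obtain ⟨k, hk⟩ := Nat.exists_eq_add_one.mpr (Fintype.card_pos (α := ι))
  rw [← sub_neg_eq_add, ← neg_vecMulVec, ← eval_charpoly, charpoly_vecMulVec, hk]
  simp only [Polynomial.eval_sub, Polynomial.eval_pow, Polynomial.eval_X, Polynomial.eval_smul,
    neg_dotProduct, smul_eq_mul, Nat.add_sub_cancel]
  ring

end Matrix

theorem sum_Hp (n : ℕ) : ∑ i, Hp n i = 0 := by
  simp [Hp, Fin.sum_univ_castSucc]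

theorem sum_Hbar (n : ℕ) : ∑ i, Hbar n i = -1 := by
  simp [Hbar, Finset.sum_sub_distrib, sum_Hp]

theorem Amat_eq_scalar_add_vecMulVec (n : ℕ) (lam b : ℂ) (S : Finset (Fin (n + 1))) (N : ℕ) :
    Amat n lam b S N = Matrix.scalar _ (C (b - lam - N + 2)) +
      Matrix.vecMulVec (fun i => if i ∈ S then 1 else Hbar n i - C b)
        (fun j => if j ∈ S then Hbar n j - C b else 1) := by
  ext i j
  by_cases hij : i = j
  · subst hij
    by_cases hi : i ∈ S <;> simp [Amat, Matrix.vecMulVec_apply, hi] <;> ring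
  · simp [Amat, Matrix.vecMulVec_apply, hij]

theorem statement16_general (n : ℕ) (lam b : ℂ) (S : Finset (Fin (n + 1))) (N : ℕ) :
    Matrix.det (Amat n lam b S N)
      = C ((-(n : ℂ) * b - lam - N + 1) * (b - lam - N + 2) ^ n) := by
  have hdot : ((fun i => if i ∈ S then 1 else Hbar n i - C b) ⬝ᵥ
      fun j => if j ∈ S then Hbar n j - C b else 1) = C (-1 - (n + 1) * b) := by
    have hprod (i : Fin (n + 1)) : ((if i ∈ S then 1 else Hbar n i - C b) *
        if i ∈ S then Hbar n i - C b else 1) = Hbar n i - C b := by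
      split_ifs <;> ring
    simp only [dotProduct, hprod, Finset.sum_sub_distrib, sum_Hbar, Finset.sum_const,
      Finset.card_univ, Fintype.card_fin, nsmul_eq_mul, map_sub, map_neg, map_one, map_mul,
      map_add, map_natCast]
    push_cast
    ring
  rw [Amat_eq_scalar_add_vecMulVec, Matrix.det_scalar_add_vecMulVec, hdot, Fintype.card_fin,
    Nat.add_sub_cancel, ← map_pow, ← map_add, ← map_mul]
  congr 1
  ring

/-- Lemma: `det A(λ,b,S,N) = (-nb - λ - N + 1)(b - λ - N + 2)^n` (a constant polynomial). -/
theorem statement16 (n : ℕ) (hn : 1 ≤ n) (lam b : ℂ) (S : Finset (Fin (n + 1))) (N : ℕ) :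
    Matrix.det (Amat n lam b S N)
      = C ((-(n : ℂ) * b - lam - N + 1) * (b - lam - N + 2) ^ n) :=
  statement16_general n lam b S N
end
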